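/- Let R be an integral domain. Every finite partition of R has at least one cell that is both additively central in (R, +) and multiplicatively central in (R \ {0}, ·) if and only if R is a large integral domain (every nonzero ideal of R has finite additive index). -/

import Mathlib

/-- Product of ultrafilters on a semigroup `S` (the restriction to `βS` of the
Stone–Čech extension of the multiplication):
`A ∈ umul p q ↔ {x | {y | x * y ∈ A} ∈ q} ∈ p`. -/
def umul {S : Type*} [Semigroup S] (p q : Ultrafilter S) : Ultrafilter S :=
  p.bind fun x => q.map (x * ·)

/-- `p` is a minimal idempotent of `(βS, ·)`: `p` is idempotent and minimal for the
order `q ≤ p ↔ q·p = p·q = q` on idempotents. -/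
def IsMinimalIdempotent {S : Type*} [Semigroup S] (p : Ultrafilter S) : Prop :=
  umul p p = p ∧ ∀ q : Ultrafilter S, umul q q = q →
    umul q p = q → umul p q = q → q = p

/-- `A` is central in the semigroup `(S, ·)`: `A` belongs to some minimal idempotent
ultrafilter. -/
def Central {S : Type*} [Semigroup S] (A : Set S) : Prop :=
  ∃ p : Ultrafilter S, IsMinimalIdempotent p ∧ A ∈ p

/-- Sum of ultrafilters on an additive semigroup `S`:
`A ∈ uadd p q ↔ {x | {y | x + y ∈ A} ∈ q} ∈ p`. -/
def uadd {S : Type*} [AddSemigroup S] (p q : Ultrafilter S) : Ultrafilter S :=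
  p.bind fun x => q.map (x + ·)

/-- `p` is a minimal idempotent of `(βS, +)`. -/
def IsMinimalIdempotentAdd {S : Type*} [AddSemigroup S] (p : Ultrafilter S) : Prop :=
  uadd p p = p ∧ ∀ q : Ultrafilter S, uadd q q = q →
    uadd q p = q → uadd p q = q → q = p

/-- `A` is central in the additive semigroup `(S, +)`. -/
def AddCentral {S : Type*} [AddSemigroup S] (A : Set S) : Prop :=
  ∃ p : Ultrafilter S, IsMinimalIdempotentAdd p ∧ A ∈ p

/-- The multiplicative semigroup `(R \ {0}, ·)` of an integral domain. -/
instance nzSemigroup {R : Type*} [CommRing R] [IsDomain R] :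
    Semigroup {x : R // x ≠ 0} where
  mul a b := ⟨a.1 * b.1, mul_ne_zero a.2 b.2⟩
  mul_assoc a b c := Subtype.ext (mul_assoc a.1 b.1 c.1)

/-- `A ⊆ R` is multiplicatively central in `(R \ {0}, ·)`. -/
def MulCentralNZ {R : Type*} [CommRing R] [IsDomain R] (A : Set R) : Prop :=
  Central {x : {x : R // x ≠ 0} | (x : R) ∈ A}

/-- `R` is a large integral domain: every nonzero ideal has finite (additive) index. -/
def IsLargeID (R : Type*) [CommRing R] [IsDomain R] : Prop :=
  ∀ I : Ideal R, I ≠ ⊥ → Finite (R ⧸ I)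

/-
If a nonzero ideal `I` has infinite additive index, the partition `{I, Iᶜ}` has no good cell.
A minimal idempotent `p` of `β(R, +)` lies in a minimal left ideal `L`, and compactness of `L`
makes every member of `p` piecewise syndetic; a subgroup of infinite index is not, so `I` is not
additively central. On the other hand `I ∖ {0}` is a two-sided ideal of `(R ∖ {0}, ·)`, and such
an ideal belongs to every minimal idempotent, so `Iᶜ` is not multiplicatively central.

Conversely, if `R` is large then for `a ≠ 0` the map `x ↦ a * x` is an injective endomorphism
of `(R, +)` with image of finite index, and such a map sends minimal idempotents of `β(R, +)` to
minimal idempotents. Hence the ultrafilters on `R ∖ {0}` all of whose members are additively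
central form a closed left ideal of `β(R ∖ {0}, ·)`. It contains a minimal left ideal, hence a
minimal multiplicative idempotent `e`, and the cell of a finite partition that lies in `e` is
central for both operations.
-/

open Filter Set Function

attribute [to_additive existing uadd] umul
attribute [to_additive existing IsMinimalIdempotentAdd] IsMinimalIdempotent
attribute [to_additive existing AddCentral] Central

attribute [local instance] Ultrafilter.semigroup Ultrafilter.addSemigroup

theorem Ultrafilter.isClosed_setOf_forall_mem {α : Type*} (Q : Set α → Prop) :
    IsClosed {u : Ultrafilter α | ∀ A ∈ u, Q A} := by
  have : {u : Ultrafilter α | ∀ A ∈ u, Q A} = ⋂ (A : Set α) (_ : ¬ Q A), {u | A ∈ u}ᶜ := by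
    ext u
    simp only [mem_iInter, mem_compl_iff]
    exact ⟨fun h A hA hAu => hA (h A hAu), fun h A hAu => by_contra fun hA => h A hA hAu⟩
  rw [this]
  exact isClosed_biInter fun A _ => (ultrafilter_isOpen_basic A).isClosed_compl

theorem Ultrafilter.map_injective {α β : Type*} {f : α → β} (hf : Injective f) :
    Injective (Ultrafilter.map f) := fun _ _ h =>
  Ultrafilter.coe_injective (Filter.map_injective hf (congrArg Ultrafilter.toFilter h))

theorem Ultrafilter.map_comap {α β : Type*} {f : α → β} (u : Ultrafilter β) (hf : Injective f)
    (hu : range f ∈ u) : (u.comap hf hu).map f = u :=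
  Ultrafilter.coe_injective (Filter.map_comap_of_mem hu)

@[to_additive]
theorem Ultrafilter.map_mul {M N F : Type*} [Semigroup M] [Semigroup N] [FunLike F M N]
    [MulHomClass F M N] (φ : F) (p q : Ultrafilter M) : (p * q).map φ = p.map φ * q.map φ := by
  ext A
  change {x | {y | φ (x * y) ∈ A} ∈ q} ∈ p ↔ {x | {y | φ x * φ y ∈ A} ∈ q} ∈ p
  simp only [_root_.map_mul]

section Semigroup

variable {S : Type*} [Semigroup S]

@[to_additive]
theorem Ultrafilter.mem_mul_iff {p q : Ultrafilter S} {A : Set S} :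
    A ∈ p * q ↔ {x | {y | x * y ∈ A} ∈ q} ∈ p := Iff.rfl

@[to_additive]
theorem Ultrafilter.mem_pure_mul_iff {a : S} {q : Ultrafilter S} {A : Set S} :
    A ∈ pure a * q ↔ {y | a * y ∈ A} ∈ q := Iff.rfl

@[to_additive isMinimalIdempotentAdd_iff]
theorem isMinimalIdempotent_iff {p : Ultrafilter S} :
    IsMinimalIdempotent p ↔
      p * p = p ∧ ∀ q : Ultrafilter S, q * q = q → q * p = q → p * q = q → q = p :=
  Iff.rfl

theorem Ultrafilter.mul_mem_of_forall_pure_mul_mem {K : Set (Ultrafilter S)} (hK : IsClosed K)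
    {q : Ultrafilter S} (h : ∀ b, pure b * q ∈ K) (u : Ultrafilter S) : u * q ∈ K :=
  denseRange_pure.induction_on u (hK.preimage (Ultrafilter.continuous_mul_left q)) h

@[to_additive IsClosedAddLeftIdeal]
def IsClosedLeftIdeal (L : Set (Ultrafilter S)) : Prop :=
  L.Nonempty ∧ IsClosed L ∧ ∀ u, ∀ x ∈ L, u * x ∈ L

@[to_additive isClosedAddLeftIdeal_range_add_right]
theorem isClosedLeftIdeal_range_mul_right (p : Ultrafilter S) :
    IsClosedLeftIdeal (range (· * p)) := by
  refine ⟨⟨p * p, p, rfl⟩, (isCompact_range (Ultrafilter.continuous_mul_left p)).isClosed, ?_⟩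
  rintro u _ ⟨v, rfl⟩
  exact ⟨u * v, mul_assoc u v p⟩

@[to_additive isClosedAddLeftIdeal_sInter]
theorem isClosedLeftIdeal_sInter {c : Set (Set (Ultrafilter S))}
    (hc : ∀ L ∈ c, IsClosedLeftIdeal L) (hchain : IsChain (· ⊆ ·) c) (hne : c.Nonempty) :
    IsClosedLeftIdeal (⋂₀ c) := by
  have : Nonempty c := hne.to_subtype
  refine ⟨IsCompact.nonempty_sInter_of_directed_nonempty_isCompact_isClosed
      (fun a ha b hb => (hchain.total ha hb).elim (fun h => ⟨a, ha, subset_rfl, h⟩)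
        (fun h => ⟨b, hb, h, subset_rfl⟩))
      (fun L hL => (hc L hL).1) (fun L hL => (hc L hL).2.1.isCompact) (fun L hL => (hc L hL).2.1),
    isClosed_sInter fun L hL => (hc L hL).2.1, fun u x hx L hL => (hc L hL).2.2 u x (hx L hL)⟩

@[to_additive]
theorem IsClosedLeftIdeal.exists_minimal_subset {L₀ : Set (Ultrafilter S)}
    (h : IsClosedLeftIdeal L₀) : ∃ L ⊆ L₀, Minimal IsClosedLeftIdeal L :=
  zorn_superset_nonempty {L | IsClosedLeftIdeal L}
    (fun _ hc hchain hne => ⟨_, isClosedLeftIdeal_sInter hc hchain hne,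
      fun _ => sInter_subset_of_mem⟩) L₀ h

@[to_additive]
theorem IsClosedLeftIdeal.exists_idempotent {L : Set (Ultrafilter S)} (h : IsClosedLeftIdeal L) :
    ∃ e ∈ L, e * e = e :=
  exists_idempotent_in_compact_subsemigroup Ultrafilter.continuous_mul_left L h.1
    h.2.1.isCompact fun x _ y hy => h.2.2 x y hy

section Minimal

variable {L : Set (Ultrafilter S)} (hL : Minimal IsClosedLeftIdeal L)
include hL

@[to_additive]
theorem exists_mul_eq_of_minimal {x y : Ultrafilter S} (hx : x ∈ L) (hy : y ∈ L) :
    ∃ u, u * x = y := by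
  rw [← hL.eq_of_subset (isClosedLeftIdeal_range_mul_right x)
    (by rintro _ ⟨u, rfl⟩; exact hL.prop.2.2 u x hx)] at hy
  exact hy

@[to_additive isMinimalIdempotentAdd_of_mem_minimal]
theorem isMinimalIdempotent_of_mem_minimal {e : Ultrafilter S} (he : e ∈ L) (hee : e * e = e) :
    IsMinimalIdempotent e := by
  refine isMinimalIdempotent_iff.mpr ⟨hee, fun q hqq hqe heq => ?_⟩
  obtain ⟨u, hu⟩ := exists_mul_eq_of_minimal hL (hqe ▸ hL.prop.2.2 q e he) he
  calc q = e * q := heq.symm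
    _ = e := by rw [← hu, mul_assoc, hqq]

end Minimal

@[to_additive exists_minimal_mem_of_minimal_in_addSubsemigroup]
theorem exists_minimal_mem_of_minimal_in_subsemigroup {N : Set (Ultrafilter S)} (hN : IsClosed N)
    (hNmul : ∀ x ∈ N, ∀ y ∈ N, x * y ∈ N)
    (hNL : ∀ L, Minimal IsClosedLeftIdeal L → (L ∩ N).Nonempty)
    {P : Ultrafilter S} (hPN : P ∈ N) (hPP : P * P = P)
    (hP : ∀ Q ∈ N, Q * Q = Q → Q * P = Q → P * Q = Q → Q = P) :
    ∃ L, Minimal IsClosedLeftIdeal L ∧ P ∈ L := by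
  obtain ⟨L, hLP, hL⟩ := (isClosedLeftIdeal_range_mul_right P).exists_minimal_subset
  obtain ⟨e, ⟨heL, heN⟩, hee⟩ := exists_idempotent_in_compact_subsemigroup
    Ultrafilter.continuous_mul_left (L ∩ N) (hNL L hL) (hL.prop.2.1.inter hN).isCompact
    fun x hx y hy => ⟨hL.prop.2.2 x y hy.1, hNmul x hx.2 y hy.2⟩
  obtain ⟨u, hu⟩ := hLP heL
  have heP : e * P = e := by rw [← hu, mul_assoc, hPP]
  have hPe : P * e = P := hP (P * e) (hNmul P hPN e heN)
    (by rw [mul_assoc, ← mul_assoc e, heP, hee]) (by rw [mul_assoc, heP])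
    (by rw [← mul_assoc, hPP])
  exact ⟨L, hL, hPe ▸ hL.prop.2.2 P e heL⟩

@[to_additive]
theorem IsMinimalIdempotent.exists_minimal_mem {p : Ultrafilter S} (hp : IsMinimalIdempotent p) :
    ∃ L, Minimal IsClosedLeftIdeal L ∧ p ∈ L :=
  exists_minimal_mem_of_minimal_in_subsemigroup isClosed_univ (fun _ _ _ _ => trivial)
    (fun _ hL => by simpa using hL.prop.1) trivial hp.1 fun q _ => hp.2 q

theorem IsMinimalIdempotent.mem_of_absorbing {p : Ultrafilter S} (hp : IsMinimalIdempotent p)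
    {J : Set S} (hJ : J.Nonempty) (hleft : ∀ x, ∀ y ∈ J, x * y ∈ J)
    (hright : ∀ x ∈ J, ∀ y, x * y ∈ J) : J ∈ p := by
  obtain ⟨L, hL, hpL⟩ := hp.exists_minimal_mem
  obtain ⟨j, hj⟩ := hJ
  have hJw : J ∈ pure j * p := Ultrafilter.mem_pure_mul_iff.mpr (univ_mem' (hright j hj))
  obtain ⟨u, hu⟩ := exists_mul_eq_of_minimal hL (hL.prop.2.2 (pure j) p hpL) hpL
  rw [← hu]
  generalize pure j * p = w at hJw
  exact Ultrafilter.mem_mul_iff.mpr (univ_mem' fun x => mem_of_superset hJw (hleft x))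

end Semigroup

section AddSemigroup

variable {S : Type*} [AddSemigroup S]

theorem AddCentral.mono {A B : Set S} (hAB : A ⊆ B) (hA : AddCentral A) : AddCentral B :=
  let ⟨p, hp, hAp⟩ := hA
  ⟨p, hp, mem_of_superset hAp hAB⟩

theorem exists_isMinimalIdempotentAdd [Nonempty S] :
    ∃ p : Ultrafilter S, IsMinimalIdempotentAdd p := by
  obtain ⟨L, -, hL⟩ :=
    (isClosedAddLeftIdeal_range_add_right (pure (Classical.arbitrary S))).exists_minimal_subset
  obtain ⟨e, he, hee⟩ := hL.prop.exists_idempotent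
  exact ⟨e, isMinimalIdempotentAdd_of_mem_minimal hL he hee⟩

/-- Members of a minimal idempotent are piecewise syndetic. -/
theorem IsMinimalIdempotentAdd.exists_finset {p : Ultrafilter S} (hp : IsMinimalIdempotentAdd p)
    {A : Set S} (hA : A ∈ p) : ∃ t : Finset S, ∀ s, ∃ x ∈ t, {y | x + (s + y) ∈ A} ∈ p := by
  obtain ⟨L, hL, hpL⟩ := hp.exists_minimal_mem
  have hcover : L ⊆ ⋃ x, {q : Ultrafilter S | {y | x + y ∈ A} ∈ q} := fun q hq => by
    obtain ⟨u, rfl⟩ := exists_add_eq_of_minimal hL hq hpL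
    obtain ⟨x, hx⟩ := Ultrafilter.nonempty_of_mem (Ultrafilter.mem_add_iff.mp hA)
    exact mem_iUnion.mpr ⟨x, hx⟩
  obtain ⟨t, ht⟩ := hL.prop.2.1.isCompact.elim_finite_subcover _
    (fun x => ultrafilter_isOpen_basic _) hcover
  refine ⟨t, fun s => ?_⟩
  obtain ⟨x, hxt, hx⟩ := mem_iUnion₂.mp (ht (hL.prop.2.2 (pure s) p hpL))
  exact ⟨x, hxt, hx⟩

end AddSemigroup

section Group

variable {G : Type*} [Group G]

@[to_additive]
theorem Ultrafilter.exists_mem_pure_mul_of_finiteIndex (H : Subgroup G) [H.FiniteIndex]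
    (w : Ultrafilter G) : ∃ g, (H : Set G) ∈ pure g * w := by
  obtain ⟨c, hc⟩ := (w.map (QuotientGroup.mk : G → G ⧸ H)).eq_pure_of_finite
  have hcw : (QuotientGroup.mk ⁻¹' {c} : Set G) ∈ w := by
    rw [← Ultrafilter.mem_map, hc]
    exact Ultrafilter.mem_pure.mpr rfl
  refine ⟨c.out⁻¹, Ultrafilter.mem_pure_mul_iff.mpr (mem_of_superset hcw fun x hx => ?_)⟩
  exact QuotientGroup.eq.mp (by rw [QuotientGroup.out_eq', ← hx])

@[to_additive]
theorem IsMinimalIdempotent.map {G' : Type*} [Group G'] (φ : G →* G') (hφ : Injective φ)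
    [φ.range.FiniteIndex] {p : Ultrafilter G} (hp : IsMinimalIdempotent p) :
    IsMinimalIdempotent (p.map φ) := by
  obtain ⟨hpp, hpmin⟩ := isMinimalIdempotent_iff.mp hp
  set N := {u : Ultrafilter G' | (φ.range : Set G') ∈ u}
  have hNmul : ∀ x ∈ N, ∀ y ∈ N, x * y ∈ N := fun x hx y hy =>
    mem_of_superset hx fun a ha => mem_of_superset hy fun b hb => φ.range.mul_mem ha hb
  have hNL : ∀ L, Minimal IsClosedLeftIdeal L → (L ∩ N).Nonempty := fun L hL => by
    obtain ⟨w, hw⟩ := hL.prop.1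
    obtain ⟨g, hg⟩ := Ultrafilter.exists_mem_pure_mul_of_finiteIndex φ.range w
    exact ⟨pure g * w, hL.prop.2.2 _ w hw, hg⟩
  have hPN : p.map φ ∈ N :=
    show (φ.range : Set G') ∈ p.map φ from Ultrafilter.mem_map.mpr (univ_mem' fun x => ⟨x, rfl⟩)
  have hPP : p.map φ * p.map φ = p.map φ := by rw [← Ultrafilter.map_mul, hpp]
  have hPmin : ∀ Q ∈ N, Q * Q = Q → Q * p.map φ = Q → p.map φ * Q = Q → Q = p.map φ := by
    intro Q hQ hQQ hQP hPQ
    obtain ⟨q, rfl⟩ : ∃ q, q.map φ = Q := ⟨Q.comap hφ hQ, Q.map_comap hφ hQ⟩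
    simp only [← Ultrafilter.map_mul] at hQQ hQP hPQ
    have hinj := Ultrafilter.map_injective hφ
    rw [hpmin q (hinj hQQ) (hinj hQP) (hinj hPQ)]
  obtain ⟨L, hL, hPL⟩ :=
    exists_minimal_mem_of_minimal_in_subsemigroup (ultrafilter_isClosed_basic _) hNmul hNL hPN hPP
      hPmin
  exact isMinimalIdempotent_of_mem_minimal hL hPL hPP

end Group

theorem IsMinimalIdempotentAdd.addSubgroup_notMem {G : Type*} [AddCommGroup G]
    {H : AddSubgroup G} [Infinite (G ⧸ H)] {p : Ultrafilter G} (hp : IsMinimalIdempotentAdd p) :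
    (H : Set G) ∉ p := by
  intro hH
  obtain ⟨t, ht⟩ := hp.exists_finset hH
  choose x hxt hx using ht
  obtain ⟨c, d, hcd, hxcd⟩ :=
    Finite.exists_ne_map_eq_of_infinite fun c : G ⧸ H => (⟨x c.out, hxt _⟩ : t)
  have hxcd : x c.out = x d.out := congrArg Subtype.val hxcd
  obtain ⟨y, hyc, hyd⟩ := Ultrafilter.nonempty_of_mem (inter_mem (hx c.out) (hx d.out))
  replace hyc : x d.out + (c.out + y) ∈ H := hxcd ▸ hyc
  apply hcd
  rw [← QuotientAddGroup.out_eq' c, ← QuotientAddGroup.out_eq' d, QuotientAddGroup.eq]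
  convert H.sub_mem hyd hyc using 1
  abel

theorem Ideal.not_addCentral_of_infinite_quotient {R : Type*} [CommRing R] (I : Ideal R)
    [h : Infinite (R ⧸ I)] : ¬ AddCentral (I : Set R) :=
  have : Infinite (R ⧸ I.toAddSubgroup) := h
  fun ⟨_, hp, hI⟩ => hp.addSubgroup_notMem (H := I.toAddSubgroup) hI

section IntegralDomain

variable {R : Type*} [CommRing R] [IsDomain R]

theorem Ideal.not_mulCentralNZ_compl {I : Ideal R} (hI : I ≠ ⊥) :
    ¬ MulCentralNZ ((I : Set R)ᶜ) := by
  rintro ⟨p, hp, hIp⟩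
  obtain ⟨a, haI, ha⟩ := Submodule.exists_mem_ne_zero_of_ne_bot hI
  have : {x : {x : R // x ≠ 0} | x.1 ∈ I} ∈ p := hp.mem_of_absorbing ⟨⟨a, ha⟩, haI⟩
    (fun x y hy => I.mul_mem_left x.1 hy) (fun x hx y => I.mul_mem_right y.1 hx)
  exact Ultrafilter.compl_mem_iff_notMem.mp hIp this

theorem isLargeID_of_partition_regular
    (h : ∀ k : ℕ, ∀ C : Fin k → Set R, ⋃ i, C i = univ →
      ∃ i, AddCentral (C i) ∧ MulCentralNZ (C i)) : IsLargeID R := by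
  intro I hI
  by_contra hfin
  have : Infinite (R ⧸ I) := not_finite_iff_infinite.mp hfin
  obtain ⟨i, hadd, hmul⟩ :=
    h 2 ![I, (I : Set R)ᶜ] (by simp [Fin.exists_fin_two, iUnion_eq_univ_iff, em])
  fin_cases i
  · exact I.not_addCentral_of_infinite_quotient hadd
  · exact Ideal.not_mulCentralNZ_compl hI hmul

theorem IsLargeID.finiteIndex_range_mulLeft (hR : IsLargeID R) {a : R} (ha : a ≠ 0) :
    (AddMonoidHom.mulLeft a).range.FiniteIndex := by
  have : Finite (R ⧸ Ideal.span {a}) := hR _ (by simpa [Ideal.span_singleton_eq_bot] using ha)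
  have hrange : (AddMonoidHom.mulLeft a).range = (Ideal.span {a}).toAddSubgroup := by
    ext x
    simp [Ideal.mem_span_singleton', mul_comm]
  rw [hrange]
  exact @AddSubgroup.finiteIndex_of_finite_quotient _ _ _ this

theorem IsLargeID.addCentral_of_preimage_mul_left (hR : IsLargeID R) {a : R} (ha : a ≠ 0)
    {A : Set R} (h : AddCentral ((a * ·) ⁻¹' A)) : AddCentral A := by
  obtain ⟨p, hp, hAp⟩ := h
  have := hR.finiteIndex_range_mulLeft ha
  exact ⟨p.map (AddMonoidHom.mulLeft a),
    hp.map (AddMonoidHom.mulLeft a) (mul_right_injective₀ ha), hAp⟩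

theorem IsLargeID.exists_isMinimalIdempotent_forall_addCentral [Infinite R] (hR : IsLargeID R) :
    ∃ e : Ultrafilter {x : R // x ≠ 0},
      IsMinimalIdempotent e ∧ ∀ B ∈ e, AddCentral (Subtype.val '' B) := by
  set Y := {u : Ultrafilter {x : R // x ≠ 0} | ∀ B ∈ u, AddCentral (Subtype.val '' B)}
  have hYclosed : IsClosed Y := Ultrafilter.isClosed_setOf_forall_mem _
  have hY : IsClosedLeftIdeal Y := by
    obtain ⟨p, hp⟩ := exists_isMinimalIdempotentAdd (S := R)
    -- `{0}` is a subgroup of infinite index, so `p` lives on `R ∖ {0}`.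
    have : Infinite (R ⧸ (⊥ : AddSubgroup R)) :=
      .of_injective _ QuotientAddGroup.quotientBot.symm.injective
    have hp0 : range (Subtype.val : {x : R // x ≠ 0} → R) ∈ p := by
      convert Ultrafilter.compl_mem_iff_notMem.mpr (hp.addSubgroup_notMem (H := ⊥))
      ext
      simp
    refine ⟨⟨p.comap Subtype.val_injective hp0,
      fun B hB => ⟨p, hp, (Ultrafilter.mem_comap _ _ _).mp hB⟩⟩, hYclosed, ?_⟩
    intro u q hq
    refine Ultrafilter.mul_mem_of_forall_pure_mul_mem hYclosed (fun b B hB => ?_) u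
    refine hR.addCentral_of_preimage_mul_left b.2 ((hq _ hB).mono ?_)
    rintro _ ⟨y, hy, rfl⟩
    exact ⟨b * y, hy, rfl⟩
  obtain ⟨L, hLY, hL⟩ := hY.exists_minimal_subset
  obtain ⟨e, he, hee⟩ := hL.prop.exists_idempotent
  exact ⟨e, isMinimalIdempotent_of_mem_minimal hL he hee, hLY he⟩

theorem IsLargeID.exists_addCentral_and_mulCentralNZ [Infinite R] (hR : IsLargeID R) {k : ℕ}
    (C : Fin k → Set R) (hC : ⋃ i, C i = univ) : ∃ i, AddCentral (C i) ∧ MulCentralNZ (C i) := by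
  obtain ⟨e, he, heC⟩ := hR.exists_isMinimalIdempotent_forall_addCentral
  obtain ⟨i, hi⟩ := Ultrafilter.eventually_exists_iff.mp
    (univ_mem' fun x : {x : R // x ≠ 0} => mem_iUnion.mp (hC ▸ mem_univ x.1))
  exact ⟨i, (heC _ hi).mono (image_preimage_subset _ _), e, he, hi⟩

end IntegralDomain

/-- For an infinite integral domain `R`, every finite partition of `R` has a cell
that is both additively central in `(R,+)` and multiplicatively central in
`(R \ {0}, ·)` if and only if `R` is a large integral domain. -/
theorem stmt_17 {R : Type*} [CommRing R] [IsDomain R] [Infinite R] :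
    (∀ k : ℕ, ∀ C : Fin k → Set R, (⋃ i, C i) = Set.univ →
      ∃ i, AddCentral (C i) ∧ MulCentralNZ (C i)) ↔ IsLargeID R :=
  ⟨isLargeID_of_partition_regular, fun hR _ => hR.exists_addCentral_and_mulCentralNZ⟩
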